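/- Let G be a finite simple graph on a vertex set V with n = |V| ≥ 2, let v₀ ∈ V with r = deg_G v₀ ≥ 1, let G' be the induced subgraph of G on V ∖ {v₀}, and let α : V → V → ℝ be antisymmetric. For the magnetic combinatorial Laplacians of (G, α) (with n eigenvalues λ_1 ≤ … ≤ λ_n) and (G', α restricted) (with n−1 eigenvalues λ'_1 ≤ … ≤ λ'_{n−1}): λ_k ≤ λ'_{k + r − 1} for all 1 ≤ k ≤ n − r, and λ'_k ≤ λ_{k+1} for all 1 ≤ k ≤ n − 1. -/

import Mathlib

/-- The magnetic weighted Laplacian `Δ(w,m,α)` as a matrix acting on `ℂ^V`: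
`(Δφ)(v) = (1/m v) · Σ_u w v u · (φ(v) − exp(i·α v u)·φ(u))`. -/
noncomputable def magLap {V : Type} [Fintype V] [DecidableEq V]
    (w : V → V → ℝ) (m : V → ℝ) (α : V → V → ℝ) : Matrix V V ℂ :=
  fun v u => (if v = u then (((∑ u', w v u') / m v : ℝ) : ℂ) else 0)
    - ((w v u / m v : ℝ) : ℂ) * Complex.exp (Complex.I * (α v u : ℝ))

open scoped Classical

/-- The magnetic combinatorial Laplacian of a simple graph: vertex weight `1`,
edge weight the adjacency indicator. -/
noncomputable def combLap {V : Type} [Fintype V] [DecidableEq V]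
    (G : SimpleGraph V) (α : V → V → ℝ) : Matrix V V ℂ :=
  magLap (fun v u => if G.Adj v u then 1 else 0) (fun _ => 1) α

/-- The eigenvalues (with multiplicity, nondecreasing) of a matrix with real
spectrum: real parts of the roots of the characteristic polynomial, sorted;
`lamk A k` is the `(k+1)`-st smallest (0-based index). -/
noncomputable def lamk {V : Type} [Fintype V] [DecidableEq V] (A : Matrix V V ℂ) (k : ℕ) : ℝ :=
  ((A.charpoly.roots.map Complex.re).sort (· ≤ ·)).getD k 0

/-!
Both inequalities follow from the Courant–Fischer characterisation
`λ_k ≤ c ↔ ∃ S, k + 1 ≤ dim S ∧ ∀ x ∈ S, ⟪x, Δx⟫ ≤ c ‖x‖²`, by moving test subspaces between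
`ℂ^V` and `ℂ^(V ∖ {v₀})`. The energy of `x` splits as the energy of its restriction `x'` plus
`∑_{u ~ v₀} |x v₀ - e^{iα(v₀,u)} x u|²`.

* The vectors of a test subspace for `λ_{k+1}` that vanish at `v₀` form a subspace of codimension
  at most one; their restrictions have the same norm and no larger energy, whence
  `λ'_k ≤ λ_{k+1}`.
* On the vectors `x'` of a test subspace for `λ'_{k+r-1}` impose the `r - 1` linear conditions
  that all `e^{iα(v₀,u)} x' u`, `u ~ v₀`, agree, and extend by this common value: the energy is
  unchanged and the norm grows, which suffices because `λ' ≥ 0`. Hence `λ_k ≤ λ'_{k+r-1}`.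
-/

open Module Matrix Complex ComplexConjugate
open scoped InnerProductSpace

namespace LinearMap.IsSymmetric

variable {𝕜 E : Type*} [RCLike 𝕜] [NormedAddCommGroup E] [InnerProductSpace 𝕜 E]
  [FiniteDimensional 𝕜 E] {T : E →ₗ[𝕜] E} (hT : T.IsSymmetric) {n : ℕ} (hn : finrank 𝕜 E = n)

lemma re_inner_apply_eq_sum (x : E) :
    RCLike.re ⟪x, T x⟫_𝕜
      = ∑ i, hT.eigenvalues hn i * ‖(hT.eigenvectorBasis hn).repr x i‖ ^ 2 := by
  rw [← (hT.eigenvectorBasis hn).repr.inner_map_map, PiLp.inner_apply, map_sum]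
  refine Finset.sum_congr rfl fun i _ => ?_
  rw [eigenvectorBasis_apply_self_apply, ← smul_eq_mul, inner_smul_right,
    inner_self_eq_norm_sq_to_K, ← RCLike.ofReal_pow, RCLike.re_ofReal_mul, RCLike.ofReal_re]

lemma norm_sq_eq_sum (x : E) : ‖x‖ ^ 2 = ∑ i, ‖(hT.eigenvectorBasis hn).repr x i‖ ^ 2 := by
  rw [← EuclideanSpace.norm_sq_eq, LinearIsometryEquiv.norm_map]

lemma repr_eq_zero_of_mem_span {s : Set (Fin n)} {x : E}
    (hx : x ∈ Submodule.span 𝕜 (hT.eigenvectorBasis hn '' s)) {i : Fin n} (hi : i ∉ s) :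
    (hT.eigenvectorBasis hn).repr x i = 0 := by
  rw [← OrthonormalBasis.coe_toBasis, Basis.mem_span_image] at hx
  rw [← OrthonormalBasis.coe_toBasis_repr_apply]
  by_contra h
  exact hi (hx (Finsupp.mem_support_iff.mpr h))

lemma re_inner_apply_le_of_mem_span {s : Set (Fin n)} {c : ℝ}
    (hs : ∀ i ∈ s, hT.eigenvalues hn i ≤ c) {x : E}
    (hx : x ∈ Submodule.span 𝕜 (hT.eigenvectorBasis hn '' s)) :
    RCLike.re ⟪x, T x⟫_𝕜 ≤ c * ‖x‖ ^ 2 := by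
  rw [re_inner_apply_eq_sum hT hn, norm_sq_eq_sum hT hn, Finset.mul_sum]
  refine Finset.sum_le_sum fun i _ => ?_
  by_cases hi : i ∈ s
  · exact mul_le_mul_of_nonneg_right (hs i hi) (by positivity)
  · simp [repr_eq_zero_of_mem_span hT hn hx hi]

lemma le_re_inner_apply_of_mem_span {s : Set (Fin n)} {c : ℝ}
    (hs : ∀ i ∈ s, c ≤ hT.eigenvalues hn i) {x : E}
    (hx : x ∈ Submodule.span 𝕜 (hT.eigenvectorBasis hn '' s)) :
    c * ‖x‖ ^ 2 ≤ RCLike.re ⟪x, T x⟫_𝕜 := by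
  rw [re_inner_apply_eq_sum hT hn, norm_sq_eq_sum hT hn, Finset.mul_sum]
  refine Finset.sum_le_sum fun i _ => ?_
  by_cases hi : i ∈ s
  · exact mul_le_mul_of_nonneg_right (hs i hi) (by positivity)
  · simp [repr_eq_zero_of_mem_span hT hn hx hi]

lemma finrank_span_eigenvectorBasis_image (s : Finset (Fin n)) :
    finrank 𝕜 (Submodule.span 𝕜 (hT.eigenvectorBasis hn '' s)) = s.card := by
  have h := finrank_span_eq_card (R := 𝕜) (b := fun j : s => hT.eigenvectorBasis hn j)
    ((hT.eigenvectorBasis hn).orthonormal.linearIndependent.comp _ Subtype.val_injective)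
  rw [Fintype.card_coe] at h
  rw [Set.image_eq_range]
  exact h

/-- **Courant–Fischer**, with eigenvalues indexed in decreasing order. -/
theorem eigenvalues_le_iff (i : Fin n) (c : ℝ) :
    hT.eigenvalues hn i ≤ c ↔ ∃ S : Submodule 𝕜 E, n - i ≤ finrank 𝕜 S ∧
      ∀ x ∈ S, RCLike.re ⟪x, T x⟫_𝕜 ≤ c * ‖x‖ ^ 2 := by
  constructor
  · intro hc
    refine ⟨Submodule.span 𝕜 (hT.eigenvectorBasis hn '' (Finset.Ici i : Finset _)), ?_, ?_⟩
    · rw [finrank_span_eigenvectorBasis_image, Fin.card_Ici]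
    · refine fun x hx => re_inner_apply_le_of_mem_span hT hn (fun j hj => ?_) hx
      exact (hT.eigenvalues_antitone hn (Finset.mem_Ici.mp hj)).trans hc
  · rintro ⟨S, hS, hSc⟩
    set U := Submodule.span 𝕜 (hT.eigenvectorBasis hn '' (Finset.Iic i : Finset _))
    have hU : finrank 𝕜 U = i + 1 := by
      rw [finrank_span_eigenvectorBasis_image, Fin.card_Iic]
    have hSU : ¬ Disjoint S U := fun h => by
      have := Submodule.finrank_add_finrank_le_of_disjoint h
      omega
    obtain ⟨x, hxS, hxU, hx⟩ : ∃ x ∈ S, x ∈ U ∧ x ≠ 0 := by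
      simpa [Submodule.disjoint_def] using hSU
    have hlow := le_re_inner_apply_of_mem_span hT hn
      (fun j hj => hT.eigenvalues_antitone hn (Finset.mem_Iic.mp hj)) hxU
    exact le_of_mul_le_mul_right (hlow.trans (hSc x hxS)) (by positivity)

end LinearMap.IsSymmetric

lemma Matrix.IsHermitian.lamk_eq {V : Type} [Fintype V] [DecidableEq V] {A : Matrix V V ℂ}
    (hA : A.IsHermitian) (k : Fin (Fintype.card V)) : lamk A k = hA.eigenvalues₀ k.rev := by
  have hroots : A.charpoly.roots.map Complex.re = ↑(List.ofFn (hA.eigenvalues₀ ∘ Fin.rev)) := by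
    have hrev : Finset.univ.val.map Fin.rev = Finset.univ.val :=
      Multiset.map_univ_val_equiv (Fin.revPerm (n := Fintype.card V))
    rw [← Fin.univ_val_map, ← Multiset.map_map, hrev, hA.roots_charpoly_eq_eigenvalues₀,
      Multiset.map_map]
    rfl
  have hsort : (A.charpoly.roots.map Complex.re).sort (· ≤ ·)
      = List.ofFn (hA.eigenvalues₀ ∘ Fin.rev) := by
    rw [hroots, Multiset.coe_sort]
    apply List.mergeSort_of_pairwise
    simp_rw [decide_eq_true_eq, ← List.sortedLE_iff_pairwise]
    exact (hA.eigenvalues₀_antitone.comp Fin.rev_anti).sortedLE_ofFn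
  rw [lamk, hsort, List.getD_eq_getElem _ _ (by simp), List.getElem_ofFn]
  rfl

lemma Matrix.re_inner_toEuclideanLin {V : Type} [Fintype V] [DecidableEq V] (A : Matrix V V ℂ)
    (x : EuclideanSpace ℂ V) :
    (⟪x, A.toEuclideanLin x⟫_ℂ).re = (star x.ofLp ⬝ᵥ (A *ᵥ x.ofLp)).re := by
  rw [EuclideanSpace.inner_eq_star_dotProduct, dotProduct_comm]
  rfl

theorem Matrix.IsHermitian.lamk_le_iff {V : Type} [Fintype V] [DecidableEq V] {A : Matrix V V ℂ}
    (hA : A.IsHermitian) (k : Fin (Fintype.card V)) (c : ℝ) :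
    lamk A k ≤ c ↔ ∃ S : Submodule ℂ (V → ℂ), (k : ℕ) + 1 ≤ finrank ℂ S ∧
      ∀ x ∈ S, (star x ⬝ᵥ (A *ᵥ x)).re ≤ c * ∑ v, ‖x v‖ ^ 2 := by
  let e : EuclideanSpace ℂ V ≃ₗ[ℂ] (V → ℂ) := WithLp.linearEquiv 2 ℂ (V → ℂ)
  rw [hA.lamk_eq, eigenvalues₀, LinearMap.IsSymmetric.eigenvalues_le_iff, Fin.val_rev]
  simp only [Nat.sub_sub_self (Nat.succ_le_of_lt k.2)]
  constructor
  · rintro ⟨S, hS, hSc⟩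
    refine ⟨S.map (e : EuclideanSpace ℂ V →ₗ[ℂ] V → ℂ), by rwa [LinearEquiv.finrank_map_eq], ?_⟩
    rintro _ ⟨x, hx, rfl⟩
    have h := hSc x hx
    rw [RCLike.re_to_complex, re_inner_toEuclideanLin, EuclideanSpace.norm_sq_eq] at h
    exact h
  · rintro ⟨S, hS, hSc⟩
    refine ⟨S.map (e.symm : (V → ℂ) →ₗ[ℂ] EuclideanSpace ℂ V), by rwa [LinearEquiv.finrank_map_eq], ?_⟩
    rintro _ ⟨x, hx, rfl⟩
    rw [RCLike.re_to_complex, re_inner_toEuclideanLin, EuclideanSpace.norm_sq_eq]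
    exact hSc x hx

lemma Matrix.IsHermitian.lamk_nonneg {V : Type} [Fintype V] [DecidableEq V] {A : Matrix V V ℂ}
    (hA : A.IsHermitian) (hq : ∀ x, 0 ≤ (star x ⬝ᵥ (A *ᵥ x)).re) (k : Fin (Fintype.card V)) :
    0 ≤ lamk A k := by
  rw [hA.lamk_eq]
  refine eigenvalue_nonneg_of_nonneg (LinearMap.IsSymmetric.hasEigenvalue_eigenvalues _ _ _)
    fun x => ?_
  rw [RCLike.re_to_complex, re_inner_toEuclideanLin]
  exact hq _

lemma Fintype.sum_eq_add_sum_setOf_ne {V M : Type} [Fintype V] [DecidableEq V]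
    [AddCommMonoid M] (f : V → M) (v₀ : V) : ∑ v, f v = f v₀ + ∑ v : {v : V | v ≠ v₀}, f v := by
  convert Fintype.sum_eq_add_sum_subtype_ne f v₀

lemma Fintype.sum_sum_eq_sum_sum_setOf_ne_add {V M : Type} [Fintype V] [DecidableEq V]
    [AddCommMonoid M] (v₀ : V) (F : V → V → M) (hF : ∀ v u, F v u = F u v) (hF₀ : F v₀ v₀ = 0) :
    ∑ v, ∑ u, F v u
      = ∑ v : {v : V | v ≠ v₀}, ∑ u : {v : V | v ≠ v₀}, F v u + 2 • ∑ u, F v₀ u := by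
  have hrow : ∑ u, F v₀ u = ∑ u : {v : V | v ≠ v₀}, F v₀ u := by
    rw [sum_eq_add_sum_setOf_ne _ v₀, hF₀, zero_add]
  rw [sum_eq_add_sum_setOf_ne (fun v => ∑ u, F v u) v₀,
    Finset.sum_congr rfl fun (v : {v : V | v ≠ v₀}) _ => sum_eq_add_sum_setOf_ne (F v) v₀,
    Finset.sum_add_distrib, hrow]
  simp only [hF _ v₀, two_nsmul]
  abel

lemma Complex.conj_exp_I_mul_ofReal (θ : ℝ) : conj (exp (I * θ)) = exp (I * ↑(-θ)) := by
  rw [← Complex.exp_conj, map_mul, conj_I, conj_ofReal, ofReal_neg, neg_mul, mul_neg]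

lemma norm_sub_exp_I_mul_mul_symm {V : Type} {α : V → V → ℝ} (hα : ∀ v u, α v u = -α u v)
    (x : V → ℂ) (v u : V) :
    ‖x v - exp (I * α v u) * x u‖ = ‖x u - exp (I * α u v) * x v‖ := by
  have h : x v - exp (I * α v u) * x u = -exp (I * α v u) * (x u - exp (I * α u v) * x v) := by
    rw [hα u v, neg_mul, mul_sub, ← mul_assoc, ← exp_add, ofReal_neg, mul_neg, add_neg_cancel,
      exp_zero]
    ring
  rw [h, norm_mul, norm_neg, norm_exp_I_mul_ofReal, one_mul]

section MagneticLaplacian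

variable {V : Type} [Fintype V] [DecidableEq V] (G : SimpleGraph V) (α : V → V → ℝ)

lemma combLap_apply (v u : V) :
    combLap G α v u = (if v = u then ((∑ w, if G.Adj v w then 1 else 0 : ℝ) : ℂ) else 0)
      - if G.Adj v u then exp (I * α v u) else 0 := by
  simp only [combLap, magLap, div_one]
  split_ifs <;> simp

lemma combLap_mulVec_apply (x : V → ℂ) (v : V) :
    (combLap G α *ᵥ x) v = ∑ u, if G.Adj v u then x v - exp (I * α v u) * x u else 0 := by
  simp only [mulVec, dotProduct, combLap_apply, sub_mul, Finset.sum_sub_distrib, ite_mul,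
    zero_mul, Finset.sum_ite_eq, Finset.mem_univ, if_true, ofReal_sum, Finset.sum_mul]
  rw [← Finset.sum_sub_distrib]
  refine Finset.sum_congr rfl fun u _ => ?_
  split_ifs <;> simp

lemma combLap_isHermitian (hα : ∀ v u, α v u = -α u v) : (combLap G α).IsHermitian := by
  refine Matrix.IsHermitian.ext fun v u => ?_
  rw [combLap_apply, combLap_apply, star_sub]
  congr 1
  · by_cases h : v = u
    · subst h
      simp
    · rw [if_neg h, if_neg (Ne.symm h), star_zero]
  · by_cases h : G.Adj v u
    · rw [if_pos h, if_pos h.symm, RCLike.star_def, ← Complex.exp_conj, hα u v]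
      simp
    · rw [if_neg h, if_neg (fun h' => h h'.symm), star_zero]

lemma two_mul_re_dotProduct_combLap_mulVec (hα : ∀ v u, α v u = -α u v) (x : V → ℂ) :
    2 * (star x ⬝ᵥ (combLap G α *ᵥ x)).re
      = ∑ v, ∑ u, if G.Adj v u then ‖x v - exp (I * α v u) * x u‖ ^ 2 else 0 := by
  set D : V → V → ℂ := fun v u =>
    if G.Adj v u then conj (x v) * (x v - exp (I * α v u) * x u) else 0
  have hD : star x ⬝ᵥ (combLap G α *ᵥ x) = ∑ v, ∑ u, D v u := by
    simp only [dotProduct, combLap_mulVec_apply, Finset.mul_sum, Pi.star_apply, RCLike.star_def,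
      mul_ite, mul_zero, D]
  have hsymm : ∀ v u, D v u + D u v
      = if G.Adj v u then ((‖x v - exp (I * α v u) * x u‖ ^ 2 : ℝ) : ℂ) else 0 := by
    intro v u
    by_cases h : G.Adj v u
    · have he := conj_mul' (exp (I * α v u))
      rw [norm_exp_I_mul_ofReal, ofReal_one, one_pow] at he
      simp only [D, if_pos h, if_pos h.symm, hα u v, ofReal_pow, ← conj_mul', map_sub, map_mul]
      rw [← conj_exp_I_mul_ofReal]
      linear_combination (-(conj (x u) * x u)) * he
    · simp [D, h, G.adj_comm u v]
  have h2 : 2 * (star x ⬝ᵥ (combLap G α *ᵥ x))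
      = ∑ v, ∑ u, if G.Adj v u then ((‖x v - exp (I * α v u) * x u‖ ^ 2 : ℝ) : ℂ) else 0 := by
    rw [hD, two_mul]
    nth_rw 2 [Finset.sum_comm]
    rw [← Finset.sum_add_distrib]
    exact Finset.sum_congr rfl fun v _ => by rw [← Finset.sum_add_distrib]; simp only [hsymm]
  rw [← re_ofReal_mul, ofReal_ofNat, h2]
  simp only [re_sum, apply_ite re, ofReal_re, zero_re]

lemma re_dotProduct_combLap_mulVec_nonneg (hα : ∀ v u, α v u = -α u v) (x : V → ℂ) :
    0 ≤ (star x ⬝ᵥ (combLap G α *ᵥ x)).re := by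
  have h := two_mul_re_dotProduct_combLap_mulVec G α hα x
  have : 0 ≤ ∑ v, ∑ u, if G.Adj v u then ‖x v - exp (I * α v u) * x u‖ ^ 2 else 0 :=
    Finset.sum_nonneg fun v _ => Finset.sum_nonneg fun u _ => by split_ifs <;> positivity
  linarith

variable (hα : ∀ v u, α v u = -α u v) (v₀ : V)
include hα

lemma re_dotProduct_combLap_mulVec_eq_induce_add (x : V → ℂ) :
    (star x ⬝ᵥ (combLap G α *ᵥ x)).re
      = (star (fun u : {v : V | v ≠ v₀} => x u) ⬝ᵥ
          (combLap (G.induce {v : V | v ≠ v₀}) (fun a b => α a b) *ᵥ fun u => x u)).re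
        + ∑ u, if G.Adj v₀ u then ‖x v₀ - exp (I * α v₀ u) * x u‖ ^ 2 else 0 := by
  set F : V → V → ℝ := fun v u =>
    if G.Adj v u then ‖x v - exp (I * α v u) * x u‖ ^ 2 else 0
  have hF : ∀ v u, F v u = F u v := fun v u => by
    simp only [F, G.adj_comm v u, norm_sub_exp_I_mul_mul_symm hα x v u]
  have hG := two_mul_re_dotProduct_combLap_mulVec G α hα x
  have hG' : 2 * (star (fun u : {v : V | v ≠ v₀} => x u) ⬝ᵥ
      (combLap (G.induce {v : V | v ≠ v₀}) (fun a b => α a b) *ᵥ fun u => x u)).re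
      = ∑ v : {v : V | v ≠ v₀}, ∑ u : {v : V | v ≠ v₀}, F v u :=
    two_mul_re_dotProduct_combLap_mulVec (G.induce {v : V | v ≠ v₀}) (fun a b => α a b)
      (fun a b => hα a b) (fun u => x u)
  rw [Fintype.sum_sum_eq_sum_sum_setOf_ne_add v₀ F hF (by simp [F]), ← hG', nsmul_eq_mul] at hG
  simp only [F] at hG
  push_cast at hG
  linarith

lemma re_dotProduct_combLap_induce_mulVec_le (x : V → ℂ) :
    (star (fun u : {v : V | v ≠ v₀} => x u) ⬝ᵥ
        (combLap (G.induce {v : V | v ≠ v₀}) (fun a b => α a b) *ᵥ fun u => x u)).re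
      ≤ (star x ⬝ᵥ (combLap G α *ᵥ x)).re := by
  rw [re_dotProduct_combLap_mulVec_eq_induce_add G α hα v₀ x, le_add_iff_nonneg_right]
  exact Finset.sum_nonneg fun u _ => by split_ifs <;> positivity

lemma re_dotProduct_combLap_mulVec_eq_induce {x : V → ℂ}
    (hx : ∀ u, G.Adj v₀ u → x v₀ = exp (I * α v₀ u) * x u) :
    (star x ⬝ᵥ (combLap G α *ᵥ x)).re
      = (star (fun u : {v : V | v ≠ v₀} => x u) ⬝ᵥ
          (combLap (G.induce {v : V | v ≠ v₀}) (fun a b => α a b) *ᵥ fun u => x u)).re := by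
  rw [re_dotProduct_combLap_mulVec_eq_induce_add G α hα v₀ x, add_eq_left]
  refine Finset.sum_eq_zero fun u _ => ?_
  split_ifs with hu
  · rw [hx u hu, sub_self, norm_zero, sq, mul_zero]
  · rfl

end MagneticLaplacian

section ExtendAt

variable {V R : Type} [DecidableEq V] [CommSemiring R] (v₀ : V)

def extendAt (φ : ({v : V | v ≠ v₀} → R) →ₗ[R] R) : ({v : V | v ≠ v₀} → R) →ₗ[R] (V → R) :=
  LinearMap.pi fun v => if h : v = v₀ then φ else LinearMap.proj (⟨v, h⟩ : {v : V | v ≠ v₀})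

variable {v₀} (φ : ({v : V | v ≠ v₀} → R) →ₗ[R] R) (ψ : {v : V | v ≠ v₀} → R)

@[simp]
lemma extendAt_apply_self : extendAt v₀ φ ψ v₀ = φ ψ := by
  simp [extendAt]

@[simp]
lemma extendAt_apply_val (v : {v : V | v ≠ v₀}) : extendAt v₀ φ ψ v = ψ v := by
  rw [extendAt, LinearMap.pi_apply, dif_neg v.2]
  rfl

lemma extendAt_restrict : (fun v : {v : V | v ≠ v₀} => extendAt v₀ φ ψ v) = ψ :=
  funext (extendAt_apply_val φ ψ)

lemma extendAt_injective : Function.Injective (extendAt v₀ φ) := fun ψ ψ' h =>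
  funext fun v => by simpa using congrFun h v

end ExtendAt

lemma sum_norm_sq_extendAt {V : Type} [Fintype V] [DecidableEq V] {v₀ : V}
    (φ : ({v : V | v ≠ v₀} → ℂ) →ₗ[ℂ] ℂ) (ψ : {v : V | v ≠ v₀} → ℂ) :
    ∑ v, ‖extendAt v₀ φ ψ v‖ ^ 2 = ‖φ ψ‖ ^ 2 + ∑ v, ‖ψ v‖ ^ 2 := by
  rw [Fintype.sum_eq_add_sum_setOf_ne _ v₀]
  simp only [extendAt_apply_self, extendAt_apply_val]

noncomputable def phaseMismatch {V : Type} (α : V → V → ℝ) (v₀ : V) (N : Finset V) :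
    (V → ℂ) →ₗ[ℂ] (N → ℂ) :=
  LinearMap.pi fun u => LinearMap.proj v₀ - exp (I * α v₀ u) • LinearMap.proj (u : V)

lemma mem_ker_phaseMismatch {V : Type} {α : V → V → ℝ} {v₀ : V} {N : Finset V} {x : V → ℂ} :
    x ∈ LinearMap.ker (phaseMismatch α v₀ N) ↔ ∀ u ∈ N, x v₀ = exp (I * α v₀ u) * x u := by
  simp [phaseMismatch, funext_iff, sub_eq_zero]

section Dimension

variable {K M N : Type} [DivisionRing K] [AddCommGroup M] [Module K M] [FiniteDimensional K M]
  [AddCommGroup N] [Module K N] [FiniteDimensional K N]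

lemma Submodule.finrank_le_finrank_inf_ker_add (p : Submodule K M) (f : M →ₗ[K] N) :
    finrank K p ≤ finrank K ↥(p ⊓ LinearMap.ker f) + finrank K N := by
  have h₁ := Submodule.finrank_sup_add_finrank_inf_eq p (LinearMap.ker f)
  have h₂ := Submodule.finrank_le (p ⊔ LinearMap.ker f)
  have h₃ := LinearMap.finrank_range_add_finrank_ker f
  have h₄ := Submodule.finrank_le (LinearMap.range f)
  omega

lemma Submodule.finrank_add_finrank_range_le_finrank_comap_add (p : Submodule K M)
    (f : N →ₗ[K] M) :
    finrank K p + finrank K (LinearMap.range f) ≤ finrank K (p.comap f) + finrank K M := by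
  have h₁ := Submodule.finrank_sup_add_finrank_inf_eq p (LinearMap.range f)
  have h₂ := Submodule.finrank_le (p ⊔ LinearMap.range f)
  have h₃ : finrank K ↥(p ⊓ LinearMap.range f) ≤ finrank K (p.comap f) := by
    rw [inf_comm, ← Submodule.map_comap_eq]
    exact Submodule.finrank_map_le f _
  omega

end Dimension

section Interlacing

variable {V : Type} [Fintype V] [DecidableEq V] (G : SimpleGraph V) (α : V → V → ℝ)
  (hα : ∀ v u, α v u = -α u v) (v₀ : V)

include hα

theorem lamk_combLap_induce_le_lamk_combLap_succ (k : ℕ) (hk : k + 1 < Fintype.card V) :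
    lamk (combLap (G.induce {v : V | v ≠ v₀}) (fun a b => α a b)) k
      ≤ lamk (combLap G α) (k + 1) := by
  have hA := combLap_isHermitian G α hα
  have hA' := combLap_isHermitian (G.induce {v : V | v ≠ v₀}) (fun a b => α a b)
    (fun a b => hα a b)
  obtain ⟨S, hS, hSc⟩ := (hA.lamk_le_iff ⟨k + 1, hk⟩ _).mp le_rfl
  refine (hA'.lamk_le_iff ⟨k, by rw [Set.card_ne_eq]; omega⟩ _).mpr
    ⟨S.comap (extendAt v₀ 0), ?_, fun ψ hψ => ?_⟩
  · have h := S.finrank_add_finrank_range_le_finrank_comap_add (extendAt v₀ 0)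
    rw [LinearMap.finrank_range_of_inj (extendAt_injective 0), finrank_fintype_fun_eq_card,
      finrank_fintype_fun_eq_card, Set.card_ne_eq] at h
    dsimp only at hS ⊢
    omega
  · have hq := re_dotProduct_combLap_induce_mulVec_le G α hα v₀ (extendAt v₀ 0 ψ)
    have hbound := hSc _ hψ
    rw [extendAt_restrict] at hq
    rw [sum_norm_sq_extendAt, LinearMap.zero_apply, norm_zero, sq, mul_zero, zero_add] at hbound
    exact hq.trans hbound

theorem lamk_combLap_le_lamk_combLap_induce (hr : 1 ≤ G.degree v₀) (k : ℕ)
    (hk : k + G.degree v₀ < Fintype.card V) :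
    lamk (combLap G α) k
      ≤ lamk (combLap (G.induce {v : V | v ≠ v₀}) (fun a b => α a b)) (k + (G.degree v₀ - 1)) := by
  have hA := combLap_isHermitian G α hα
  have hA' := combLap_isHermitian (G.induce {v : V | v ≠ v₀}) (fun a b => α a b)
    (fun a b => hα a b)
  set c := lamk (combLap (G.induce {v : V | v ≠ v₀}) (fun a b => α a b)) (k + (G.degree v₀ - 1))
  have hj : k + (G.degree v₀ - 1) < Fintype.card {v : V | v ≠ v₀} := by
    rw [Set.card_ne_eq]; omega
  obtain ⟨S₀, hS₀, hS₀c⟩ := (hA'.lamk_le_iff ⟨_, hj⟩ c).mp le_rfl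
  have hc : 0 ≤ c := hA'.lamk_nonneg
    (re_dotProduct_combLap_mulVec_nonneg _ _ fun a b => hα a b) ⟨_, hj⟩
  obtain ⟨u₀, hu₀⟩ : (G.neighborFinset v₀).Nonempty := by
    rw [← Finset.card_pos, G.card_neighborFinset_eq_degree]; omega
  have hu₀' : G.Adj v₀ u₀ := (G.mem_neighborFinset _ _).1 hu₀
  let φ : ({v : V | v ≠ v₀} → ℂ) →ₗ[ℂ] ℂ :=
    exp (I * α v₀ u₀) • LinearMap.proj (⟨u₀, hu₀'.ne'⟩ : {v : V | v ≠ v₀})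
  -- the phase condition at `u₀` holds on the whole range of `extendAt v₀ φ`
  let C := phaseMismatch α v₀ ((G.neighborFinset v₀).erase u₀)
  refine (hA.lamk_le_iff ⟨k, by omega⟩ c).mpr
    ⟨S₀.map (extendAt v₀ φ) ⊓ LinearMap.ker C, ?_, ?_⟩
  · have h := (S₀.map (extendAt v₀ φ)).finrank_le_finrank_inf_ker_add C
    rw [← LinearEquiv.finrank_eq (Submodule.equivMapOfInjective _ (extendAt_injective φ) S₀),
      finrank_fintype_fun_eq_card, Fintype.card_coe, Finset.card_erase_of_mem hu₀,
      G.card_neighborFinset_eq_degree] at h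
    dsimp only at hS₀ ⊢
    omega
  · rintro _ ⟨⟨ψ, hψ, rfl⟩, hC⟩
    have hbalanced : ∀ u, G.Adj v₀ u →
        extendAt v₀ φ ψ v₀ = exp (I * α v₀ u) * extendAt v₀ φ ψ u := by
      intro u hu
      by_cases hu₀u : u = u₀
      · obtain rfl := hu₀u
        rw [extendAt_apply_self]
        exact congrArg (exp (I * α v₀ u) * ·) (extendAt_apply_val φ ψ ⟨u, hu₀'.ne'⟩).symm
      · exact mem_ker_phaseMismatch.mp hC u
          (Finset.mem_erase.mpr ⟨hu₀u, (G.mem_neighborFinset _ _).2 hu⟩)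
    rw [re_dotProduct_combLap_mulVec_eq_induce G α hα v₀ hbalanced, extendAt_restrict,
      sum_norm_sq_extendAt]
    calc _ ≤ c * ∑ v, ‖ψ v‖ ^ 2 := hS₀c ψ hψ
      _ ≤ c * (‖φ ψ‖ ^ 2 + ∑ v, ‖ψ v‖ ^ 2) := by gcongr; exact le_add_of_nonneg_left (by positivity)

end Interlacing

theorem stmt16_general {V : Type} [Fintype V] [DecidableEq V]
    (G : SimpleGraph V) (v₀ : V) (hr : 1 ≤ G.degree v₀)
    (α : V → V → ℝ) (hα : ∀ v u, α v u = - α u v) :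
    (∀ k : ℕ, 1 ≤ k → k ≤ Fintype.card V - G.degree v₀ →
      lamk (combLap G α) (k - 1)
        ≤ lamk (combLap (G.induce {v : V | v ≠ v₀}) (fun a b => α a.1 b.1))
            ((k - 1) + (G.degree v₀ - 1)))
    ∧ (∀ k : ℕ, 1 ≤ k → k ≤ Fintype.card V - 1 →
      lamk (combLap (G.induce {v : V | v ≠ v₀}) (fun a b => α a.1 b.1)) (k - 1)
        ≤ lamk (combLap G α) k) := by
  refine ⟨fun k hk₁ hk₂ => ?_, fun k hk₁ hk₂ => ?_⟩
  · exact lamk_combLap_le_lamk_combLap_induce G α hα v₀ hr (k - 1) (by omega)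
  · have h := lamk_combLap_induce_le_lamk_combLap_succ G α hα v₀ (k - 1) (by omega)
    rwa [Nat.sub_add_cancel hk₁] at h

/-- deleting a vertex `v₀` of degree `r ≥ 1` (passing to the
induced subgraph on `V ∖ {v₀}`) with combinatorial weights:
`λ_k ≤ λ'_{k+r−1}` for `1 ≤ k ≤ n − r`, and `λ'_k ≤ λ_{k+1}` for
`1 ≤ k ≤ n − 1`. -/
theorem stmt16 {V : Type} [Fintype V] [DecidableEq V] [Nonempty V]
    (hn : 2 ≤ Fintype.card V)
    (G : SimpleGraph V) (v₀ : V) (hr : 1 ≤ G.degree v₀)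
    (α : V → V → ℝ) (hα : ∀ v u, α v u = - α u v) :
    (∀ k : ℕ, 1 ≤ k → k ≤ Fintype.card V - G.degree v₀ →
      lamk (combLap G α) (k - 1)
        ≤ lamk (combLap (G.induce {v : V | v ≠ v₀}) (fun a b => α a.1 b.1))
            ((k - 1) + (G.degree v₀ - 1)))
    ∧ (∀ k : ℕ, 1 ≤ k → k ≤ Fintype.card V - 1 →
      lamk (combLap (G.induce {v : V | v ≠ v₀}) (fun a b => α a.1 b.1)) (k - 1)
        ≤ lamk (combLap G α) k) :=
  stmt16_general G v₀ hr α hα
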